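/- arXiv:1709.05174 — 3 statements merged into one kernel-verified Lean document; each statement's English description precedes it below -/
import Mathlib

section
/- Let p be a pmf on X×Y (X, Y finite) and let α ∈ (0,1) ∪ (1,∞]. Then J_α(p) ≥ 0, with J_α(p) = 0 if and only if p is a product pmf, i.e., p(x,y) = p_X(x)·p_Y(y) for all (x,y), where p_X and p_Y are the marginals of p. -/
/-!
Write `q` and `r` for the two distributions on `(X × Y) × (X × Y)` in `J_α(p) = D_α(q‖r)`; both
are pmfs, `r` being `q` composed with the exchange of the `Y`-coordinates. For finite `α`, the
weighted AM-GM inequality (`α < 1`) or its reverse (`α > 1`), applied term by term, shows that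
`(α - 1) (Σ q^α r^(1-α) - 1) ≥ 0` with equality only if `q = r`; for `α = ∞`, the largest ratio
`q/r` is at least `1` because both sum to `1`. Hence `D_α(q‖r) ≥ 0` with equality iff `q = r`,
which holds iff `p(x₁,y₁) p(x₂,y₂) = p(x₁,y₂) p(x₂,y₁)` for all points; summing over `(x₂,y₂)`
shows that this is exactly `p = p_X ⊗ p_Y`.
-/

/-- A probability mass function on a finite set `S`. -/
def IsPMF {S : Type*} [Fintype S] (p : S → ℝ) : Prop :=
  (∀ s, 0 ≤ p s) ∧ ∑ s, p s = 1

open Classical in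
/-- Rényi divergence of order `α ∈ (0,1) ∪ (1,∞]` between finitely supported
distributions, with values in `(-∞,∞]`:
`D_α(p‖q) = (α−1)⁻¹ · log Σ_{s : p(s)>0} p(s)^α q(s)^{1−α}` for finite `α`, equal to
`+∞` if `α > 1` and `supp p ⊄ supp q`, and
`D_∞(p‖q) = log max_{s : p(s)>0} p(s)/q(s)`, equal to `+∞` if `supp p ⊄ supp q`. -/
noncomputable def renyiD {S : Type*} [Fintype S] (α : ENNReal) (p q : S → ℝ) : EReal :=
  if α = ⊤ then
    (if ∀ s, 0 < p s → 0 < q s then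
      ((Real.log (sSup { r : ℝ | ∃ s, 0 < p s ∧ r = p s / q s }) : ℝ) : EReal)
    else ⊤)
  else if 1 < α ∧ ¬ ∀ s, 0 < p s → 0 < q s then ⊤
  else (((α.toReal - 1)⁻¹ *
      Real.log (∑ s ∈ Finset.univ.filter (fun s => 0 < p s),
        p s ^ α.toReal * q s ^ (1 - α.toReal)) : ℝ) : EReal)

/-- The correlation measure `J_α(p) = D_α(q‖r)` where
`q((x₁,y₁),(x₂,y₂)) = p(x₁,y₁)·p(x₂,y₂)` and
`r((x₁,y₁),(x₂,y₂)) = p(x₁,y₂)·p(x₂,y₁)`. -/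
noncomputable def Jalpha {X Y : Type*} [Fintype X] [Fintype Y] (α : ENNReal)
    (p : X × Y → ℝ) : EReal :=
  renyiD α (fun t : (X × Y) × (X × Y) => p t.1 * p t.2)
    (fun t : (X × Y) × (X × Y) => p (t.1.1, t.2.2) * p (t.2.1, t.1.2))

open Finset Real

lemma sub_one_mul_rpow_one_add_sub_pos {s w : ℝ} (hs : -1 ≤ s) (hs0 : s ≠ 0) (hw : 0 < w)
    (hw1 : w ≠ 1) : 0 < (w - 1) * ((1 + s) ^ w - (1 + w * s)) := by
  rcases hw1.lt_or_gt with hlt | hgt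
  · have := rpow_one_add_lt_one_add_mul_self hs hs0 hw hlt
    exact mul_pos_of_neg_of_neg (by linarith) (by linarith)
  · have := one_add_mul_self_lt_rpow_one_add hs hs0 hgt
    exact mul_pos (by linarith) (by linarith)

lemma rpow_mul_rpow_one_sub_self {a : ℝ} (ha : 0 ≤ a) (w : ℝ) : a ^ w * a ^ (1 - w) = a := by
  rw [← rpow_add' ha (by norm_num), add_sub_cancel, rpow_one]

/-- Nonnegative both for `0 < w < 1` (weighted AM-GM) and for `1 < w` (its reverse). -/
noncomputable def meanGap (w a b : ℝ) : ℝ :=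
  (w - 1) * (a ^ w * b ^ (1 - w) - (w * a + (1 - w) * b))

section MeanGap

variable {w a b : ℝ}

lemma meanGap_self (ha : 0 ≤ a) : meanGap w a a = 0 := by
  rw [meanGap, rpow_mul_rpow_one_sub_self ha]
  ring

lemma meanGap_pos (hw : 0 < w) (hw1 : w ≠ 1) (ha : 0 ≤ a) (hb : 0 ≤ b) (hwb : w < 1 ∨ 0 < b)
    (hab : a ≠ b) : 0 < meanGap w a b := by
  rcases hb.eq_or_lt with rfl | hb
  · have hw1' : w < 1 := hwb.resolve_right (lt_irrefl 0)
    have ha' : 0 < a := ha.lt_of_ne hab.symm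
    rw [meanGap, zero_rpow (by linarith)]
    nlinarith [mul_pos hw ha']
  · have hrw : a ^ w * b ^ (1 - w) - (w * a + (1 - w) * b) =
        b * ((1 + (a / b - 1)) ^ w - (1 + w * (a / b - 1))) := by
      rw [add_sub_cancel, div_rpow ha hb.le, rpow_sub hb, rpow_one]
      field_simp
      ring
    rw [meanGap, hrw, mul_left_comm]
    refine mul_pos hb (sub_one_mul_rpow_one_add_sub_pos ?_ ?_ hw hw1)
    · linarith [div_nonneg ha hb.le]
    · rwa [sub_ne_zero, ne_eq, div_eq_one_iff_eq hb.ne']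

lemma meanGap_nonneg (hw : 0 < w) (hw1 : w ≠ 1) (ha : 0 ≤ a) (hb : 0 ≤ b)
    (hwb : w < 1 ∨ 0 < b) : 0 ≤ meanGap w a b := by
  rcases eq_or_ne a b with rfl | hab
  · exact (meanGap_self ha).ge
  · exact (meanGap_pos hw hw1 ha hb hwb hab).le

end MeanGap

lemma log_eq_zero_iff_of_pos {t : ℝ} (ht : 0 < t) : log t = 0 ↔ t = 1 :=
  ⟨eq_one_of_pos_of_log_eq_zero ht, fun h => h ▸ log_one⟩

lemma inv_mul_log_nonneg {c t : ℝ} (ht : 0 < t) (h : 0 ≤ c * (t - 1)) : 0 ≤ c⁻¹ * log t := by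
  rcases lt_trichotomy c 0 with hc | rfl | hc
  · have : t ≤ 1 := by nlinarith
    exact mul_nonneg_of_nonpos_of_nonpos (inv_neg''.mpr hc).le (log_nonpos ht.le this)
  · simp
  · have : 1 ≤ t := by nlinarith
    exact mul_nonneg (inv_pos.mpr hc).le (log_nonneg this)

section Renyi

variable {S : Type*} [Fintype S] {p q : S → ℝ}

open Classical in
noncomputable def renyiSum (w : ℝ) (p q : S → ℝ) : ℝ :=
  ∑ s ∈ univ.filter (fun s => 0 < p s), p s ^ w * q s ^ (1 - w)

noncomputable def ratioSup (p q : S → ℝ) : ℝ :=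
  sSup {r : ℝ | ∃ s, 0 < p s ∧ r = p s / q s}

lemma le_ratioSup {s : S} (hs : 0 < p s) : p s / q s ≤ ratioSup p q := by
  refine le_csSup (Set.Finite.bddAbove ((Set.finite_range fun s => p s / q s).subset ?_))
    ⟨s, hs, rfl⟩
  rintro _ ⟨s, -, rfl⟩
  exact ⟨s, rfl⟩

namespace IsPMF

lemma exists_pos (hp : IsPMF p) : ∃ s, 0 < p s := by
  by_contra! h
  have : ∑ s, p s = 0 := sum_eq_zero fun s _ => le_antisymm (h s) (hp.1 s)
  linarith [hp.2]

lemma sum_le_one (hp : IsPMF p) (t : Finset S) : ∑ s ∈ t, p s ≤ 1 :=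
  hp.2 ▸ sum_le_univ_sum_of_nonneg hp.1

open Classical in
lemma sum_filter_pos (hp : IsPMF p) : ∑ s ∈ univ.filter (fun s => 0 < p s), p s = 1 := by
  rw [sum_filter_of_ne fun s _ h => (hp.1 s).lt_of_ne' h, hp.2]

lemma eq_of_forall_pos_le (hp : IsPMF p) (hq : IsPMF q) (h : ∀ s, 0 < p s → p s ≤ q s) :
    p = q := by
  have hle : ∀ s ∈ univ, p s ≤ q s := fun s _ =>
    (hp.1 s).lt_or_eq.elim (h s) fun h0 => h0 ▸ hq.1 s
  exact funext fun s => (sum_eq_sum_iff_of_le hle).mp (hp.2.trans hq.2.symm) s (mem_univ s)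

open Classical in
/-- The deficit of the arithmetic means is `(w - 1)²` times the `q`-mass outside `supp p`. -/
lemma sub_one_mul_renyiSum_sub_one (hp : IsPMF p) (w : ℝ) :
    (w - 1) * (renyiSum w p q - 1) =
      ∑ s ∈ univ.filter (fun s => 0 < p s), meanGap w (p s) (q s) +
        (w - 1) ^ 2 * (1 - ∑ s ∈ univ.filter (fun s => 0 < p s), q s) := by
  simp only [renyiSum, meanGap, ← mul_sum, sum_sub_distrib, sum_add_distrib, hp.sum_filter_pos]
  ring

open Classical in
lemma sub_one_mul_renyiSum_sub_one_nonneg_and_eq_one_iff (hp : IsPMF p) (hq : IsPMF q) {w : ℝ}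
    (hw : 0 < w) (hw1 : w ≠ 1) (hsupp : w < 1 ∨ ∀ s, 0 < p s → 0 < q s) :
    0 ≤ (w - 1) * (renyiSum w p q - 1) ∧ (renyiSum w p q = 1 ↔ p = q) := by
  set F := univ.filter (fun s => 0 < p s)
  have hwb : ∀ s ∈ F, w < 1 ∨ 0 < q s := fun s hs =>
    hsupp.imp_right fun h => h s (mem_filter.mp hs).2
  have hgap : ∀ s ∈ F, 0 ≤ meanGap w (p s) (q s) := fun s hs =>
    meanGap_nonneg hw hw1 (hp.1 s) (hq.1 s) (hwb s hs)
  have hout : 0 ≤ (w - 1) ^ 2 * (1 - ∑ s ∈ F, q s) :=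
    mul_nonneg (sq_nonneg _) (sub_nonneg.mpr (hq.sum_le_one F))
  have hdecomp := hp.sub_one_mul_renyiSum_sub_one (q := q) w
  refine ⟨hdecomp ▸ add_nonneg (sum_nonneg hgap) hout, fun hT => ?_, ?_⟩
  · have hsum : ∑ s ∈ F, meanGap w (p s) (q s) = 0 := by
      rw [hT, sub_self, mul_zero] at hdecomp
      linarith [sum_nonneg hgap]
    refine hp.eq_of_forall_pos_le hq fun s hs => le_of_eq ?_
    by_contra hne
    have hsF : s ∈ F := mem_filter.mpr ⟨mem_univ s, hs⟩
    exact (meanGap_pos hw hw1 (hp.1 s) (hq.1 s) (hwb s hsF) hne).ne'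
      ((sum_eq_zero_iff_of_nonneg hgap).mp hsum s hsF)
  · rintro rfl
    simp only [renyiSum, rpow_mul_rpow_one_sub_self (hp.1 _), hp.sum_filter_pos]

lemma one_le_ratioSup (hp : IsPMF p) (hq : IsPMF q) (hsupp : ∀ s, 0 < p s → 0 < q s) :
    1 ≤ ratioSup p q := by
  classical
  obtain ⟨s₀, hs₀⟩ := hp.exists_pos
  have hM : 0 ≤ ratioSup p q := (div_pos hs₀ (hsupp s₀ hs₀)).le.trans (le_ratioSup hs₀)
  calc (1 : ℝ) = ∑ s ∈ univ.filter (fun s => 0 < p s), p s := hp.sum_filter_pos.symm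
    _ ≤ ∑ s ∈ univ.filter (fun s => 0 < p s), ratioSup p q * q s := by
      refine sum_le_sum fun s hs => ?_
      have hs := (mem_filter.mp hs).2
      exact (div_le_iff₀ (hsupp s hs)).mp (le_ratioSup hs)
    _ ≤ ratioSup p q := by
      rw [← mul_sum]
      exact mul_le_of_le_one_right hM (hq.sum_le_one _)

lemma ratioSup_eq_one_iff (hp : IsPMF p) (hq : IsPMF q) (hsupp : ∀ s, 0 < p s → 0 < q s) :
    ratioSup p q = 1 ↔ p = q := by
  refine ⟨fun h => hp.eq_of_forall_pos_le hq fun s hs => ?_, ?_⟩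
  · exact (div_le_one (hsupp s hs)).mp (h ▸ le_ratioSup hs)
  · rintro rfl
    obtain ⟨s₀, hs₀⟩ := hp.exists_pos
    refine le_antisymm (csSup_le ⟨_, s₀, hs₀, rfl⟩ ?_) (hp.one_le_ratioSup hp hsupp)
    rintro _ ⟨s, hs, rfl⟩
    exact (div_self hs.ne').le

lemma renyiD_nonneg_and_eq_zero_iff (hp : IsPMF p) (hq : IsPMF q)
    (hpos : ∃ s, 0 < p s ∧ 0 < q s) {α : ENNReal} (hα : 0 < α) (hα1 : α ≠ 1) :
    0 ≤ renyiD α p q ∧ (renyiD α p q = 0 ↔ p = q) := by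
  have unsupported : ¬ (∀ s, 0 < p s → 0 < q s) →
      0 ≤ (⊤ : EReal) ∧ ((⊤ : EReal) = 0 ↔ p = q) :=
    fun h => ⟨le_top, iff_of_false EReal.top_ne_zero fun hpq => h (hpq ▸ fun s hs => hs)⟩
  unfold renyiD
  split_ifs with htop hsupp hbad
  · have hM := hp.one_le_ratioSup hq hsupp
    refine ⟨EReal.coe_nonneg.mpr (log_nonneg hM), ?_⟩
    rw [EReal.coe_eq_zero]
    exact (log_eq_zero_iff_of_pos (zero_lt_one.trans_le hM)).trans
      (hp.ratioSup_eq_one_iff hq hsupp)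
  · exact unsupported hsupp
  · exact unsupported hbad.2
  · set w := α.toReal
    have hw : 0 < w := ENNReal.toReal_pos hα.ne' htop
    have hw1 : w ≠ 1 := fun h => hα1 ((ENNReal.toReal_eq_one_iff α).mp h)
    have hsupp : w < 1 ∨ ∀ s, 0 < p s → 0 < q s := by
      rw [not_and_or, not_not, ← ENNReal.toReal_lt_toReal ENNReal.one_ne_top htop,
        ENNReal.toReal_one, not_lt] at hbad
      exact hbad.imp (lt_of_le_of_ne · hw1) id
    obtain ⟨s, hps, hqs⟩ := hpos
    have hT : 0 < renyiSum w p q :=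
      sum_pos' (fun s _ => by have := hp.1 s; have := hq.1 s; positivity)
        ⟨s, mem_filter.mpr ⟨mem_univ s, hps⟩, by positivity⟩
    obtain ⟨hnonneg, hiff⟩ :=
      hp.sub_one_mul_renyiSum_sub_one_nonneg_and_eq_one_iff hq hw hw1 hsupp
    refine ⟨EReal.coe_nonneg.mpr (inv_mul_log_nonneg hT hnonneg), ?_⟩
    rw [EReal.coe_eq_zero, mul_eq_zero, inv_eq_zero, sub_eq_zero, or_iff_right hw1]
    exact (log_eq_zero_iff_of_pos hT).trans hiff

end IsPMF

end Renyi

section Coupling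

variable {S X Y : Type*} [Fintype S] [Fintype X] [Fintype Y]

def swapSnd : Equiv.Perm ((X × Y) × (X × Y)) :=
  Function.Involutive.toPerm (fun t => ((t.1.1, t.2.2), (t.2.1, t.1.2))) fun _ => rfl

lemma IsPMF.mul_self {p : S → ℝ} (hp : IsPMF p) : IsPMF fun t : S × S => p t.1 * p t.2 :=
  ⟨fun t => mul_nonneg (hp.1 _) (hp.1 _), by
    rw [Fintype.sum_prod_type, ← sum_mul_sum, hp.2, mul_one]⟩

lemma IsPMF.comp_perm {p : S → ℝ} (hp : IsPMF p) (e : Equiv.Perm S) : IsPMF (p ∘ e) :=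
  ⟨fun s => hp.1 (e s), (Equiv.sum_comp e p).trans hp.2⟩

lemma IsPMF.eq_marginal_mul_iff {p : X × Y → ℝ} (hp : IsPMF p) :
    (∀ x y, p (x, y) = (∑ y', p (x, y')) * (∑ x', p (x', y))) ↔
      (fun t : (X × Y) × (X × Y) => p t.1 * p t.2) =
        fun t => p (t.1.1, t.2.2) * p (t.2.1, t.1.2) := by
  constructor
  · intro h
    ext ⟨⟨x₁, y₁⟩, ⟨x₂, y₂⟩⟩
    simp only [h x₁ y₁, h x₂ y₂, h x₁ y₂, h x₂ y₁]
    ring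
  · intro h x y
    have := congr_arg (fun f => ∑ t : X × Y, f ((x, y), t)) h
    simp only [← mul_sum, hp.2, mul_one, Fintype.sum_prod_type] at this
    rw [this, sum_comm, sum_mul_sum]

end Coupling

/-- faithfulness: for any pmf `p` on `X × Y` and any
`α ∈ (0,1) ∪ (1,∞]`, we have `J_α(p) ≥ 0`, with equality iff `p` is a product pmf. -/
theorem Jalpha_nonneg_and_eq_zero_iff {X Y : Type*} [Fintype X] [Fintype Y]
    (p : X × Y → ℝ) (hp : IsPMF p) (α : ENNReal) (hα : 0 < α ∧ α ≠ 1) :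
    0 ≤ Jalpha α p ∧
      (Jalpha α p = 0 ↔ ∀ x y, p (x, y) = (∑ y', p (x, y')) * (∑ x', p (x', y))) := by
  have hq := hp.mul_self
  obtain ⟨s, hs⟩ := hp.exists_pos
  obtain ⟨hJ, hJ0⟩ := hq.renyiD_nonneg_and_eq_zero_iff (hq.comp_perm swapSnd)
    ⟨(s, s), mul_pos hs hs, mul_pos hs hs⟩ hα.1 hα.2
  exact ⟨hJ, hJ0.trans hp.eq_marginal_mul_iff.symm⟩
end

section
/- Let F, X, Y be finite sets and let p be a pmf on F×X×Y of the form p(f,x,y) = p(f,x)·W(y|x) for some channel W from X to Y (so F → X → Y is a Markov chain). For each f with p_F(f) > 0 let p^f be the conditional pmf on X×Y given F = f. Then max{ J_∞(p^f) : f with p_F(f) > 0 } ≤ J_∞(p_{XY}), where p_{XY} is the (X,Y)-marginal of p. -/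
open Finset

lemma renyiD_top_eq_log_sSup {S : Type*} [Fintype S] {p q : S → ℝ}
    (h : ∀ s, 0 < p s → 0 < q s) :
    renyiD ⊤ p q = ((Real.log (sSup { r : ℝ | ∃ s, 0 < p s ∧ r = p s / q s }) : ℝ) : EReal) := by
  rw [renyiD, if_pos rfl, if_pos h]

lemma renyiD_top_eq_top {S : Type*} [Fintype S] {p q : S → ℝ}
    (h : ¬ ∀ s, 0 < p s → 0 < q s) : renyiD ⊤ p q = ⊤ := by
  rw [renyiD, if_pos rfl, if_neg h]

lemma bddAbove_setOf_exists_eq {S : Type*} [Finite S] (P : S → Prop) (g : S → ℝ) :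
    BddAbove { r : ℝ | ∃ s, P s ∧ r = g s } :=
  ((Set.finite_range g).subset (by rintro _ ⟨s, -, rfl⟩; exact ⟨s, rfl⟩)).bddAbove

lemma renyiD_top_le {S T : Type*} [Fintype S] [Fintype T] {p q : S → ℝ} {p' q' : T → ℝ}
    (hne : ∃ s, 0 < p s)
    (h : ∀ s, 0 < p s → ∃ t, 0 < p' t ∧ (0 < q' t → 0 < q s ∧ p s / q s ≤ p' t / q' t)) :
    renyiD ⊤ p q ≤ renyiD ⊤ p' q' := by
  by_cases hT : ∀ t, 0 < p' t → 0 < q' t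
  swap
  · rw [renyiD_top_eq_top hT]
    exact le_top
  have hS : ∀ s, 0 < p s → 0 < q s := fun s hs ↦
    let ⟨t, ht, hr⟩ := h s hs
    (hr (hT t ht)).1
  rw [renyiD_top_eq_log_sSup hS, renyiD_top_eq_log_sSup hT, EReal.coe_le_coe_iff]
  obtain ⟨s₀, hs₀⟩ := hne
  apply Real.log_le_log
  · exact (div_pos hs₀ (hS s₀ hs₀)).trans_le
      (le_csSup (bddAbove_setOf_exists_eq _ _) ⟨s₀, hs₀, rfl⟩)
  · refine csSup_le ⟨_, s₀, hs₀, rfl⟩ ?_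
    rintro _ ⟨s, hs, rfl⟩
    obtain ⟨t, ht, hr⟩ := h s hs
    exact (hr (hT t ht)).2.trans (le_csSup (bddAbove_setOf_exists_eq _ _) ⟨t, ht, rfl⟩)

lemma Jalpha_top_mul_channel_le {X Y : Type*} [Fintype X] [Fintype Y] {u v : X → ℝ}
    (W : X → Y → ℝ) (hu : ∀ x, 0 ≤ u x) (huv : ∀ x, 0 < u x → 0 < v x)
    (hne : ∃ x y, 0 < u x * W x y) :
    Jalpha ⊤ (fun xy : X × Y ↦ u xy.1 * W xy.1 xy.2)
      ≤ Jalpha ⊤ (fun xy : X × Y ↦ v xy.1 * W xy.1 xy.2) := by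
  have factor : ∀ (w : X → ℝ) x₁ x₂ y₁ y₂,
      w x₁ * W x₁ y₁ * (w x₂ * W x₂ y₂) = w x₁ * w x₂ * (W x₁ y₁ * W x₂ y₂) :=
    fun _ _ _ _ _ ↦ mul_mul_mul_comm _ _ _ _
  apply renyiD_top_le
  · obtain ⟨x, y, hxy⟩ := hne
    exact ⟨((x, y), (x, y)), mul_pos hxy hxy⟩
  rintro ⟨⟨x₁, y₁⟩, x₂, y₂⟩ hs
  simp only [factor u, factor v] at hs ⊢
  have hu₁ : 0 < u x₁ := (hu x₁).lt_of_ne (by rintro h; simp [← h] at hs)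
  have hu₂ : 0 < u x₂ := (hu x₂).lt_of_ne (by rintro h; simp [← h] at hs)
  have hu₁₂ : 0 < u x₁ * u x₂ := mul_pos hu₁ hu₂
  have hv₁₂ : 0 < v x₁ * v x₂ := mul_pos (huv x₁ hu₁) (huv x₂ hu₂)
  refine ⟨((x₁, y₁), (x₂, y₂)), mul_pos hv₁₂ (pos_of_mul_pos_right hs hu₁₂.le), fun hr ↦ ?_⟩
  have hW : 0 < W x₁ y₂ * W x₂ y₁ := pos_of_mul_pos_right hr hv₁₂.le
  exact ⟨mul_pos hu₁₂ hW, by rw [mul_div_mul_left _ _ hu₁₂.ne', mul_div_mul_left _ _ hv₁₂.ne']⟩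

theorem Jinfty_cond_le_general {F X Y : Type*} [Fintype F] [Fintype X] [Fintype Y]
    (p : F × X × Y → ℝ) (hp : IsPMF p)
    (W : X → Y → ℝ)
    (hform : ∀ f x y, p (f, x, y) = (∑ y', p (f, x, y')) * W x y) :
    sSup { J : EReal | ∃ f, 0 < (∑ x, ∑ y, p (f, x, y)) ∧
        J = Jalpha ⊤ (fun xy : X × Y =>
          p (f, xy.1, xy.2) / (∑ x, ∑ y, p (f, x, y))) }
      ≤ Jalpha ⊤ (fun xy : X × Y => ∑ f, p (f, xy.1, xy.2)) := by
  set a : F → X → ℝ := fun f x ↦ ∑ y, p (f, x, y)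
  have ha : ∀ f x, 0 ≤ a f x := fun f x ↦ sum_nonneg fun y _ ↦ hp.1 _
  have hmarg : (fun xy : X × Y ↦ ∑ f, p (f, xy.1, xy.2))
      = fun xy ↦ (∑ f, a f xy.1) * W xy.1 xy.2 := by
    ext ⟨x, y⟩
    rw [sum_mul]
    exact sum_congr rfl fun f _ ↦ hform f x y
  rw [hmarg]
  refine sSup_le ?_
  rintro _ ⟨f, hc, rfl⟩
  set c := ∑ x, ∑ y, p (f, x, y)
  have hcond : (fun xy : X × Y ↦ p (f, xy.1, xy.2) / c)
      = fun xy ↦ a f xy.1 / c * W xy.1 xy.2 := by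
    ext ⟨x, y⟩
    rw [hform f x y, div_mul_eq_mul_div]
  rw [hcond]
  refine Jalpha_top_mul_channel_le (u := fun x ↦ a f x / c) (v := fun x ↦ ∑ g, a g x) W
    (fun x ↦ div_nonneg (ha f x) hc.le) ?_ ?_
  · exact fun x hx ↦ (div_pos_iff_of_pos_right hc).mp hx |>.trans_le
      (single_le_sum (fun g _ ↦ ha g x) (mem_univ f))
  · obtain ⟨x, -, hx⟩ := exists_lt_of_sum_lt (by simpa using hc : ∑ x : X, (0 : ℝ) < c)
    obtain ⟨y, -, hy⟩ :=
      exists_lt_of_sum_lt (by simpa using hx : ∑ y : Y, (0 : ℝ) < ∑ y, p (f, x, y))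
    exact ⟨x, y, by rw [div_mul_eq_mul_div, ← hform]; exact div_pos hy hc⟩

/-- if `F → X → Y` is a Markov chain (the joint pmf has the form
`p(f,x,y) = p(f,x)·W(y|x)` for a channel `W`), then
`max{J_∞(p^f) : p_F(f) > 0} ≤ J_∞(p_XY)`, where `p^f` is the conditional pmf of
`(X,Y)` given `F = f` and `p_XY` is the `(X,Y)`-marginal. -/
theorem Jinfty_cond_le {F X Y : Type*} [Fintype F] [Fintype X] [Fintype Y]
    (p : F × X × Y → ℝ) (hp : IsPMF p)
    (W : X → Y → ℝ) (hW : ∀ x, IsPMF (W x))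
    (hform : ∀ f x y, p (f, x, y) = (∑ y', p (f, x, y')) * W x y) :
    sSup { J : EReal | ∃ f, 0 < (∑ x, ∑ y, p (f, x, y)) ∧
        J = Jalpha ⊤ (fun xy : X × Y =>
          p (f, xy.1, xy.2) / (∑ x, ∑ y, p (f, x, y))) }
      ≤ Jalpha ⊤ (fun xy : X × Y => ∑ f, p (f, xy.1, xy.2)) :=
  Jinfty_cond_le_general p hp W hform
end

section
/- Let X, Y be finite sets and W a channel from X to Y with W(y|x) > 0 for all x, y, and define J_∞(W) = log max{ W(y₁|x₁)·W(y₂|x₂) / ( W(y₁|x₂)·W(y₂|x₁) ) : x₁,x₂ ∈ X, y₁,y₂ ∈ Y }. Let n ≥ 1, let M, M̂ be finite sets with M = M̂, let P_M be a pmf on M, let E be a channel from M to Xⁿ (encoder), and let D be a channel from Yⁿ to M̂ (decoder). Define the end-to-end channel p(m̂|m) = Σ_{xⁿ, yⁿ} E(xⁿ|m)·(Π_{i=1}^n W(y_i|x_i))·D(m̂|yⁿ). Then for all m₁ ≠ m₂ in M with P_M(m₁) > 0 and P_M(m₂) > 0, p(m₂|m₁)·p(m₁|m₂) ≥ exp(−n·J_∞(W))·p(m₁|m₁)·p(m₂|m₂).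 -/
/-- `J_∞` of a channel `W` from `X` to `Y`:
`log max{W(y₁|x₁)W(y₂|x₂)/(W(y₁|x₂)W(y₂|x₁))}`. -/
noncomputable def JinftyChannel {X Y : Type*} [Fintype X] [Fintype Y]
    (W : X → Y → ℝ) : ℝ :=
  Real.log (sSup { r : ℝ | ∃ x₁ x₂ y₁ y₂,
    r = W x₁ y₁ * W x₂ y₂ / (W x₂ y₁ * W x₁ y₂) })

/-- The end-to-end channel `p(m̂|m)` of an encoder `E`, `n` memoryless uses of the
channel `W`, and a decoder `D`. -/
noncomputable def endToEnd {X Y M : Type*} [Fintype X] [Fintype Y] [Fintype M]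
    (W : X → Y → ℝ) (n : ℕ) (E : M → (Fin n → X) → ℝ)
    (D : (Fin n → Y) → M → ℝ) : M → M → ℝ :=
  fun m mh => ∑ xs : Fin n → X, ∑ ys : Fin n → Y,
    E m xs * (∏ i, W (xs i) (ys i)) * D ys mh

open Finset

def cascade {M A B M' : Type*} [Fintype A] [Fintype B]
    (E : M → A → ℝ) (P : A → B → ℝ) (D : B → M' → ℝ) : M → M' → ℝ :=
  fun m m' => ∑ a, ∑ b, E m a * P a b * D b m'

def memorylessExt {X Y : Type*} (W : X → Y → ℝ) (ι : Type*) [Fintype ι] :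
    (ι → X) → (ι → Y) → ℝ :=
  fun xs ys => ∏ i, W (xs i) (ys i)

/-- Every cross ratio `P a b P a' b' / (P a' b P a b')` of `P` is at most `c` (stated without
division, so that it also makes sense where `P` vanishes). -/
def CrossBounded {A B : Type*} (c : ℝ) (P : A → B → ℝ) : Prop :=
  ∀ a a' b b', P a b * P a' b' ≤ c * (P a' b * P a b')

theorem crossBounded_exp_JinftyChannel {X Y : Type*} [Fintype X] [Fintype Y]
    {W : X → Y → ℝ} (hW : ∀ x y, 0 < W x y) :
    CrossBounded (Real.exp (JinftyChannel W)) W := by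
  intro x₁ x₂ y₁ y₂
  set S : Set ℝ := { r : ℝ | ∃ x₁ x₂ y₁ y₂, r = W x₁ y₁ * W x₂ y₂ / (W x₂ y₁ * W x₁ y₂) }
  have hS : BddAbove S := by
    refine (Set.finite_range fun q : X × X × Y × Y =>
      W q.1 q.2.2.1 * W q.2.1 q.2.2.2 / (W q.2.1 q.2.2.1 * W q.1 q.2.2.2)).subset ?_ |>.bddAbove
    rintro _ ⟨a, a', b, b', rfl⟩
    exact ⟨(a, a', b, b'), rfl⟩
  have hden : 0 < W x₂ y₁ * W x₁ y₂ := mul_pos (hW _ _) (hW _ _)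
  have hratio : W x₁ y₁ * W x₂ y₂ / (W x₂ y₁ * W x₁ y₂) ≤ sSup S :=
    le_csSup hS ⟨x₁, x₂, y₁, y₂, rfl⟩
  have hsup_pos : 0 < sSup S := (div_pos (mul_pos (hW _ _) (hW _ _)) hden).trans_le hratio
  rw [JinftyChannel, Real.exp_log hsup_pos, ← div_le_iff₀ hden]
  exact hratio

theorem CrossBounded.memorylessExt {X Y : Type*} {W : X → Y → ℝ} {c : ℝ}
    (h : CrossBounded c W) (hW : ∀ x y, 0 ≤ W x y) (ι : Type*) [Fintype ι] :
    CrossBounded (c ^ Fintype.card ι) (memorylessExt W ι) := by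
  intro xs xs' ys ys'
  simp only [_root_.memorylessExt, ← prod_mul_distrib, ← card_univ, ← prod_const]
  exact prod_le_prod (fun i _ => mul_nonneg (hW _ _) (hW _ _)) fun i _ => h _ _ _ _

theorem cascade_mul_cascade {M A B M' : Type*} [Fintype A] [Fintype B]
    (E : M → A → ℝ) (P : A → B → ℝ) (D : B → M' → ℝ) (m₁ m₂ : M) (m₁' m₂' : M') :
    cascade E P D m₁ m₁' * cascade E P D m₂ m₂'
      = ∑ a, ∑ a', ∑ b, ∑ b', E m₁ a * E m₂ a' * D b m₁' * D b' m₂' * (P a b * P a' b') := by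
  simp only [cascade, Fintype.sum_mul_sum]
  exact sum_congr rfl fun a _ => sum_congr rfl fun a' _ =>
    sum_congr rfl fun b _ => sum_congr rfl fun b' _ => by ring

theorem CrossBounded.cascade_diag_le {M A B : Type*} [Fintype A] [Fintype B]
    {P : A → B → ℝ} {c : ℝ} (h : CrossBounded c P)
    {E : M → A → ℝ} (hE : ∀ m a, 0 ≤ E m a) {D : B → M → ℝ} (hD : ∀ b m, 0 ≤ D b m)
    (m₁ m₂ : M) :
    cascade E P D m₁ m₁ * cascade E P D m₂ m₂
      ≤ c * (cascade E P D m₁ m₂ * cascade E P D m₂ m₁) := by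
  calc cascade E P D m₁ m₁ * cascade E P D m₂ m₂
      = ∑ a, ∑ a', ∑ b, ∑ b', E m₁ a * E m₂ a' * D b m₁ * D b' m₂ * (P a b * P a' b') :=
        cascade_mul_cascade E P D m₁ m₂ m₁ m₂
    _ ≤ ∑ a, ∑ a', ∑ b, ∑ b', E m₁ a * E m₂ a' * D b m₁ * D b' m₂ * (c * (P a' b * P a b')) :=
        sum_le_sum fun a _ => sum_le_sum fun a' _ => sum_le_sum fun b _ => sum_le_sum fun b' _ =>
          mul_le_mul_of_nonneg_left (h a a' b b')
            (mul_nonneg (mul_nonneg (mul_nonneg (hE _ _) (hE _ _)) (hD _ _)) (hD _ _))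
    _ = c * (cascade E P D m₁ m₂ * cascade E P D m₂ m₁) := by
        simp only [cascade_mul_cascade, mul_sum]
        refine sum_congr rfl fun a _ => sum_congr rfl fun a' _ => ?_
        rw [sum_comm]
        exact sum_congr rfl fun b _ => sum_congr rfl fun b' _ => by ring

theorem endToEnd_eq_cascade {X Y M : Type*} [Fintype X] [Fintype Y] [Fintype M]
    (W : X → Y → ℝ) (n : ℕ) (E : M → (Fin n → X) → ℝ) (D : (Fin n → Y) → M → ℝ) :
    endToEnd W n E D = cascade E (memorylessExt W (Fin n)) D :=
  rfl

theorem channel_coding_uncertainty_general {X Y M : Type*} [Fintype X] [Fintype Y] [Fintype M]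
    (W : X → Y → ℝ) (hWpos : ∀ x y, 0 < W x y)
    (n : ℕ)
    (E : M → (Fin n → X) → ℝ) (hE : ∀ m, IsPMF (E m))
    (D : (Fin n → Y) → M → ℝ) (hD : ∀ ys, IsPMF (D ys))
    (m₁ m₂ : M) :
    endToEnd W n E D m₁ m₂ * endToEnd W n E D m₂ m₁
      ≥ Real.exp (-(n : ℝ) * JinftyChannel W)
          * (endToEnd W n E D m₁ m₁ * endToEnd W n E D m₂ m₂) := by
  have hcross : CrossBounded (Real.exp (JinftyChannel W) ^ n) (memorylessExt W (Fin n)) := by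
    simpa only [Fintype.card_fin] using (crossBounded_exp_JinftyChannel hWpos).memorylessExt
      (fun x y => (hWpos x y).le) (Fin n)
  rw [ge_iff_le, neg_mul, Real.exp_neg, Real.exp_nat_mul, inv_mul_le_iff₀ (by positivity),
    endToEnd_eq_cascade]
  exact hcross.cascade_diag_le (fun m => (hE m).1) (fun ys => (hD ys).1) m₁ m₂

/-- an "uncertainty principle" for channel coding: for any strictly
positive channel `W`, message pmf `P_M`, encoder, and decoder, and any two messages
`m₁ ≠ m₂` of positive probability,
`p(m₂|m₁)·p(m₁|m₂) ≥ exp(−n·J_∞(W))·p(m₁|m₁)·p(m₂|m₂)`. -/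
theorem channel_coding_uncertainty {X Y M : Type*} [Fintype X] [Fintype Y] [Fintype M]
    (W : X → Y → ℝ) (hW : ∀ x, IsPMF (W x)) (hWpos : ∀ x y, 0 < W x y)
    (n : ℕ) (hn : 1 ≤ n)
    (PM : M → ℝ) (hPM : IsPMF PM)
    (E : M → (Fin n → X) → ℝ) (hE : ∀ m, IsPMF (E m))
    (D : (Fin n → Y) → M → ℝ) (hD : ∀ ys, IsPMF (D ys))
    (m₁ m₂ : M) (hne : m₁ ≠ m₂) (h₁ : 0 < PM m₁) (h₂ : 0 < PM m₂) :
    endToEnd W n E D m₁ m₂ * endToEnd W n E D m₂ m₁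
      ≥ Real.exp (-(n : ℝ) * JinftyChannel W)
          * (endToEnd W n E D m₁ m₁ * endToEnd W n E D m₂ m₂) :=
  channel_coding_uncertainty_general W hWpos n E hE D hD m₁ m₂
end
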